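/- With two predictors and notation as above (simple slopes a₁, a₂ of Y on X₁, X₂; multiple coefficients b₁, b₂; cross-slopes c₁₂, c₂₁; correlation r), the identities b₁c₁₂ = a₂ − b₂ and b₂c₂₁ = a₁ − b₁ hold, and consequently r² = a₁a₂/(b₁b₂) − a₁/b₁ − a₂/b₂ + 1 whenever b₁ ≠ 0 and b₂ ≠ 0. -/

import Mathlib

/-!
The least-squares residual `e = Y - b₀ - b₁X₁ - b₂X₂` is orthogonal to `1`, `X₁` and `X₂`
(first-order condition at the minimum). Since covariance is bilinear and kills constants, this gives
the normal equations `cov(X₁,Y) = b₁ var X₁ + b₂ cov(X₁,X₂)` and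
`cov(X₂,Y) = b₁ cov(X₁,X₂) + b₂ var X₂`; dividing by `var X₂`, resp. `var X₁`, yields the two
identities. Finally `r² = c₂₁ c₁₂ = (a₂ - b₂)(a₁ - b₁) / (b₁ b₂)`, which expands to the formula.
-/

open Finset Filter

/-- Sample mean of a data vector. -/
noncomputable def mean (p : ℕ) (x : Fin p → ℝ) : ℝ := (∑ i, x i) / (p : ℝ)

/-- Sample covariance of two data vectors. -/
noncomputable def cov (p : ℕ) (x y : Fin p → ℝ) : ℝ :=
  (∑ i, (x i - mean p x) * (y i - mean p y)) / (p : ℝ)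

/-- Sample variance of a data vector. -/
noncomputable def svar (p : ℕ) (x : Fin p → ℝ) : ℝ := cov p x x

/-- Slope of the simple least-squares regression of `y` on `x`. -/
noncomputable def regSlope (p : ℕ) (x y : Fin p → ℝ) : ℝ := cov p x y / svar p x

lemma eq_zero_of_forall_two_mul_mul_le {L Q : ℝ} (hQ : 0 ≤ Q)
    (h : ∀ ε : ℝ, 2 * ε * L ≤ ε ^ 2 * Q) : L = 0 := by
  have hQ1 : 0 < Q + 1 := by linarith
  -- at `ε = L / (Q + 1)` the inequality becomes `L ^ 2 * (Q + 2) ≤ 0`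
  have key : 2 * (L / (Q + 1)) * L * (Q + 1) ^ 2 ≤ (L / (Q + 1)) ^ 2 * Q * (Q + 1) ^ 2 :=
    mul_le_mul_of_nonneg_right (h _) (by positivity)
  have lhs : 2 * (L / (Q + 1)) * L * (Q + 1) ^ 2 = 2 * L ^ 2 * (Q + 1) := by
    field_simp
  have rhs : (L / (Q + 1)) ^ 2 * Q * (Q + 1) ^ 2 = L ^ 2 * Q := by
    field_simp
  rw [lhs, rhs] at key
  nlinarith [sq_nonneg L]

theorem Finset.sum_mul_eq_zero_of_forall_sum_sq_le {ι : Type*} (s : Finset ι) (r d : ι → ℝ)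
    (h : ∀ ε : ℝ, ∑ i ∈ s, r i ^ 2 ≤ ∑ i ∈ s, (r i - ε * d i) ^ 2) :
    ∑ i ∈ s, r i * d i = 0 := by
  refine eq_zero_of_forall_two_mul_mul_le (Q := ∑ i ∈ s, d i ^ 2) (by positivity) fun ε ↦ ?_
  have expand : ∑ i ∈ s, (r i - ε * d i) ^ 2
      = ∑ i ∈ s, r i ^ 2 - 2 * ε * ∑ i ∈ s, r i * d i + ε ^ 2 * ∑ i ∈ s, d i ^ 2 := by
    simp only [sub_sq, mul_pow, Finset.sum_add_distrib, Finset.sum_sub_distrib, Finset.mul_sum]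
    congr 1; congr 1; refine Finset.sum_congr rfl fun i _ ↦ by ring
  linarith [h ε]

section Covariance

variable {p : ℕ}

lemma mean_add (x y : Fin p → ℝ) : mean p (x + y) = mean p x + mean p y := by
  simp only [mean, Pi.add_apply, Finset.sum_add_distrib, add_div]

lemma mean_smul (c : ℝ) (x : Fin p → ℝ) : mean p (c • x) = c * mean p x := by
  simp only [mean, Pi.smul_apply, smul_eq_mul, ← Finset.mul_sum, mul_div_assoc]

lemma cov_comm (x y : Fin p → ℝ) : cov p x y = cov p y x := by
  simp only [cov, mul_comm]

lemma cov_add_right (x y z : Fin p → ℝ) : cov p x (y + z) = cov p x y + cov p x z := by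
  simp only [cov, mean_add, Pi.add_apply, ← add_div, ← Finset.sum_add_distrib]
  congr 1
  exact Finset.sum_congr rfl fun i _ ↦ by ring

lemma cov_smul_right (c : ℝ) (x y : Fin p → ℝ) : cov p x (c • y) = c * cov p x y := by
  simp only [cov, mean_smul, Pi.smul_apply, smul_eq_mul, mul_div_assoc', Finset.mul_sum]
  congr 1
  exact Finset.sum_congr rfl fun i _ ↦ by ring

lemma cov_const_right (x : Fin p → ℝ) (c : ℝ) : cov p x (fun _ ↦ c) = 0 := by
  rcases Nat.eq_zero_or_pos p with rfl | hp
  · simp [cov]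
  · have : mean p (fun _ ↦ c) = c := by
      simp only [mean, sum_const, card_univ, Fintype.card_fin, nsmul_eq_mul]
      field_simp
    simp [cov, this]

lemma cov_eq_zero_of_sum_eq_zero {x e : Fin p → ℝ} (he : ∑ i, e i = 0)
    (hxe : ∑ i, x i * e i = 0) : cov p x e = 0 := by
  have hmean : mean p e = 0 := by simp [mean, he]
  simp [cov, hmean, sub_mul, Finset.sum_sub_distrib, ← Finset.mul_sum, he, hxe]

end Covariance

theorem sum_residual_mul_eq_zero {p : ℕ} {Y X1 X2 : Fin p → ℝ} {b0 b1 b2 : ℝ}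
    (hmin : ∀ t0 t1 t2 : ℝ,
      ∑ i, (Y i - b0 - b1 * X1 i - b2 * X2 i)^2 ≤ ∑ i, (Y i - t0 - t1 * X1 i - t2 * X2 i)^2)
    (d0 d1 d2 : ℝ) :
    ∑ i, (Y i - b0 - b1 * X1 i - b2 * X2 i) * (d0 + d1 * X1 i + d2 * X2 i) = 0 := by
  refine Finset.sum_mul_eq_zero_of_forall_sum_sq_le _ _ _ fun ε ↦ ?_
  convert hmin (b0 + ε * d0) (b1 + ε * d1) (b2 + ε * d2) using 2 with i
  ring

theorem cov_normal_equations {p : ℕ} {Y X1 X2 : Fin p → ℝ} {b0 b1 b2 : ℝ}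
    (hmin : ∀ t0 t1 t2 : ℝ,
      ∑ i, (Y i - b0 - b1 * X1 i - b2 * X2 i)^2 ≤ ∑ i, (Y i - t0 - t1 * X1 i - t2 * X2 i)^2) :
    cov p X1 Y = b1 * svar p X1 + b2 * cov p X1 X2 ∧
      cov p X2 Y = b1 * cov p X1 X2 + b2 * svar p X2 := by
  set e : Fin p → ℝ := fun i ↦ Y i - b0 - b1 * X1 i - b2 * X2 i
  have hY : Y = (fun _ ↦ b0) + b1 • X1 + b2 • X2 + e := by
    ext i; simp only [e, Pi.add_apply, Pi.smul_apply, smul_eq_mul]; ring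
  have hcov : ∀ x, ∑ i, x i * e i = 0 → cov p x Y = b1 * cov p x X1 + b2 * cov p x X2 := by
    intro x hxe
    have he : ∑ i, e i = 0 := by
      simpa only [zero_mul, add_zero, mul_one] using sum_residual_mul_eq_zero hmin 1 0 0
    rw [hY, cov_add_right, cov_add_right, cov_add_right, cov_const_right, cov_smul_right,
      cov_smul_right, cov_eq_zero_of_sum_eq_zero he hxe, zero_add, add_zero]
  constructor
  · refine hcov X1 ?_
    simpa [mul_comm] using sum_residual_mul_eq_zero hmin 0 1 0
  · rw [hcov X2, cov_comm X2 X1, svar]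
    simpa [mul_comm] using sum_residual_mul_eq_zero hmin 0 0 1

theorem regression_coeff_identities_general
    (p : ℕ) (Y X1 X2 : Fin p → ℝ) (b0 b1 b2 : ℝ)
    (hBmin : ∀ t0 t1 t2 : ℝ,
      ∑ i, (Y i - b0 - b1 * X1 i - b2 * X2 i)^2 ≤ ∑ i, (Y i - t0 - t1 * X1 i - t2 * X2 i)^2)
    (hv1 : svar p X1 ≠ 0) (hv2 : svar p X2 ≠ 0) :
    b1 * regSlope p X2 X1 = regSlope p X2 Y - b2 ∧
    b2 * regSlope p X1 X2 = regSlope p X1 Y - b1 ∧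
    (b1 ≠ 0 → b2 ≠ 0 →
      (cov p X1 X2)^2 / (svar p X1 * svar p X2) =
        regSlope p X1 Y * regSlope p X2 Y / (b1 * b2)
          - regSlope p X1 Y / b1 - regSlope p X2 Y / b2 + 1) := by
  obtain ⟨hY1, hY2⟩ := cov_normal_equations hBmin
  have hslope21 : b1 * regSlope p X2 X1 = regSlope p X2 Y - b2 := by
    rw [regSlope, regSlope, cov_comm X2 X1, hY2]
    field_simp
    ring
  have hslope12 : b2 * regSlope p X1 X2 = regSlope p X1 Y - b1 := by
    rw [regSlope, regSlope, hY1]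
    field_simp
    ring
  refine ⟨hslope21, hslope12, fun hb1 hb2 ↦ ?_⟩
  -- `r² = c₂₁ c₁₂`, and the two identities express each cross slope through `a` and `b`
  have hr : (cov p X1 X2)^2 / (svar p X1 * svar p X2) = regSlope p X2 X1 * regSlope p X1 X2 := by
    rw [regSlope, regSlope, cov_comm X2 X1]
    field_simp
  rw [hr, eq_div_of_mul_eq hb1 ((mul_comm _ _).trans hslope21),
    eq_div_of_mul_eq hb2 ((mul_comm _ _).trans hslope12)]
  field_simp
  ring

theorem regression_coeff_identities
    (p : ℕ) (Y X1 X2 : Fin p → ℝ) (b0 b1 b2 : ℝ)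
    (hBmin : ∀ t0 t1 t2 : ℝ,
      ∑ i, (Y i - b0 - b1 * X1 i - b2 * X2 i)^2 ≤ ∑ i, (Y i - t0 - t1 * X1 i - t2 * X2 i)^2)
    (hBuniq : ∀ t0 t1 t2 : ℝ,
      ∑ i, (Y i - t0 - t1 * X1 i - t2 * X2 i)^2 ≤ ∑ i, (Y i - b0 - b1 * X1 i - b2 * X2 i)^2 →
      t0 = b0 ∧ t1 = b1 ∧ t2 = b2)
    (hv1 : svar p X1 ≠ 0) (hv2 : svar p X2 ≠ 0)
    (hr : (cov p X1 X2)^2 ≠ svar p X1 * svar p X2) :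
    b1 * regSlope p X2 X1 = regSlope p X2 Y - b2 ∧
    b2 * regSlope p X1 X2 = regSlope p X1 Y - b1 ∧
    (b1 ≠ 0 → b2 ≠ 0 →
      (cov p X1 X2)^2 / (svar p X1 * svar p X2) =
        regSlope p X1 Y * regSlope p X2 Y / (b1 * b2)
          - regSlope p X1 Y / b1 - regSlope p X2 Y / b2 + 1) :=
  regression_coeff_identities_general p Y X1 X2 b0 b1 b2 hBmin hv1 hv2
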